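/- Let n > 1, n ≠ 5, and 3 < n < (11+8√2)/7. Then the two roots of λ² - ((n-5)/(n-1))λ + 2(n-3)/(n-1) = 0 are real, distinct, and both negative. -/
import Mathlib


theorem emden_fowler_nodal_sink
    (n : ℝ) (hn1 : 1 < n) (hn5 : n ≠ 5) (hn3 : 3 < n)
    (hnu : n < (11 + 8 * Real.sqrt 2) / 7) :
    ∃ lam1 lam2 : ℝ, lam1 ≠ lam2 ∧ lam1 < 0 ∧ lam2 < 0 ∧
      ∀ z : ℂ, z ^ 2 - (((n - 5) / (n - 1)) : ℝ) * z + ((2 * (n - 3) / (n - 1)) : ℝ) = 0 ↔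
        (z = (lam1 : ℂ) ∨ z = (lam2 : ℂ)) := by
  have hne : (0:ℝ) < n - 1 := by linarith
  set a : ℝ := (n - 5) / (n - 1) with ha
  set c : ℝ := 2 * (n - 3) / (n - 1) with hc
  have hs2 : Real.sqrt 2 ^ 2 = 2 := Real.sq_sqrt (by norm_num)
  have hs2' : (1:ℝ) < Real.sqrt 2 := by nlinarith [Real.sqrt_nonneg 2]
  have hn5' : n < 5 := by nlinarith [Real.sqrt_nonneg 2]
  have hD : 0 < a ^ 2 - 4 * c := by
    have h1 : 7 * n - 11 < 8 * Real.sqrt 2 := by linarith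
    have h2 : (7 * n - 11) ^ 2 < 128 := by nlinarith
    have heq : a ^ 2 - 4 * c = (-7 * n ^ 2 + 22 * n + 1) / (n - 1) ^ 2 := by
      rw [ha, hc]; field_simp; ring
    rw [heq]
    exact div_pos (by nlinarith) (by positivity)
  set D := a ^ 2 - 4 * c with hDdef
  have hs : Real.sqrt D ^ 2 = D := Real.sq_sqrt hD.le
  have hspos : 0 < Real.sqrt D := Real.sqrt_pos.mpr hD
  have hcpos : 0 < c := by rw [hc]; exact div_pos (by linarith) (by linarith)
  have haneg : a < 0 := div_neg_of_neg_of_pos (by linarith) hne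
  have hlt : Real.sqrt D < -a := by nlinarith
  set l1 : ℝ := (a - Real.sqrt D) / 2 with hl1
  set l2 : ℝ := (a + Real.sqrt D) / 2 with hl2
  have h1 : l1 + l2 = a := by rw [hl1, hl2]; ring
  have h2 : l1 * l2 = c := by rw [hl1, hl2]; nlinarith [hs]
  refine ⟨l1, l2, by rw [hl1, hl2]; intro h; nlinarith,
    by rw [hl1]; nlinarith, by rw [hl2]; nlinarith, ?_⟩
  intro z
  have key : z ^ 2 - (a : ℂ) * z + (c : ℂ) = (z - (l1 : ℂ)) * (z - (l2 : ℂ)) := by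
    rw [← h1, ← h2]; push_cast; ring
  rw [key, mul_eq_zero, sub_eq_zero, sub_eq_zero]
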